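/- Let v = s_1 ∘ s_2 ∘ ⋯ ∘ s_n (composition of reflections, rightmost factor applied first). Then: v⁻¹(α_0) = −α_n; v⁻¹(α_1) = −(α_1 + α_2 + ⋯ + α_n); v⁻¹(α_j) = α_{j−1} for every 2 ≤ j ≤ n−1; and v⁻¹(α_n) = α_n + 2α_{n−1}. -/

import Mathlib

open scoped InnerProductSpace

private lemma sRefl_invol {V : Type*} [NormedAddCommGroup V] [InnerProductSpace ℝ V]
    (b x : V) :
    (x - (2 * ⟪x, b⟫_ℝ / ⟪b, b⟫_ℝ) • b) -
      (2 * ⟪x - (2 * ⟪x, b⟫_ℝ / ⟪b, b⟫_ℝ) • b, b⟫_ℝ / ⟪b, b⟫_ℝ) • b = x := by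
  by_cases hb : b = 0
  · simp [hb]
  · have h : ⟪b, b⟫_ℝ ≠ 0 := fun h => hb (inner_self_eq_zero.mp h)
    have key : 2 * ⟪x - (2 * ⟪x, b⟫_ℝ / ⟪b, b⟫_ℝ) • b, b⟫_ℝ / ⟪b, b⟫_ℝ
        = -(2 * ⟪x, b⟫_ℝ / ⟪b, b⟫_ℝ) := by
      rw [inner_sub_left, real_inner_smul_left]
      field_simp
      ring
    rw [key, neg_smul, sub_neg_eq_add, sub_add_cancel]

/-- The reflection `s_b : x ↦ x - (2⟪x,b⟫/⟪b,b⟫) • b`, as a permutation of `V`. -/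
noncomputable def sRefl {V : Type*} [NormedAddCommGroup V] [InnerProductSpace ℝ V]
    (b : V) : Equiv.Perm V where
  toFun x := x - (2 * ⟪x, b⟫_ℝ / ⟪b, b⟫_ℝ) • b
  invFun x := x - (2 * ⟪x, b⟫_ℝ / ⟪b, b⟫_ℝ) • b
  left_inv x := sRefl_invol b x
  right_inv x := sRefl_invol b x

/-- `E n i` is the `i`-th standard basis vector of `ℝ^n` (for indices `1 ≤ i ≤ n`). -/
noncomputable def E (n i : ℕ) : EuclideanSpace ℝ (Fin n) :=
  if h : 1 ≤ i ∧ i ≤ n then EuclideanSpace.single (⟨i - 1, by omega⟩ : Fin n) 1 else 0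

/-- The simple roots of type `Cₙ` (indexed by `1 ≤ i ≤ n`):
`αᵢ = eᵢ - eᵢ₊₁` for `i ≤ n - 1` and `αₙ = 2eₙ`. -/
noncomputable def alphaC (n i : ℕ) : EuclideanSpace ℝ (Fin n) :=
  if i = n then (2 : ℝ) • E n n else E n i - E n (i + 1)

/-- The roots of type `Cₙ`: `±eᵢ ± eⱼ` (`1 ≤ i < j ≤ n`) and `±2eᵢ` (`1 ≤ i ≤ n`). -/
def RootC (n : ℕ) : Set (EuclideanSpace ℝ (Fin n)) :=
  {x | (∃ i j, 1 ≤ i ∧ i < j ∧ j ≤ n ∧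
      (x = E n i + E n j ∨ x = -(E n i + E n j) ∨ x = E n i - E n j ∨ x = E n j - E n i)) ∨
    (∃ i, 1 ≤ i ∧ i ≤ n ∧ (x = (2 : ℝ) • E n i ∨ x = -((2 : ℝ) • E n i)))}

/-- A positive root of type `Cₙ`: a root which is a nonnegative integer combination of
the simple roots. -/
def IsPosC (n : ℕ) (x : EuclideanSpace ℝ (Fin n)) : Prop :=
  x ∈ RootC n ∧ ∃ c : ℕ → ℕ, x = ∑ i ∈ Finset.Icc 1 n, (c i : ℝ) • alphaC n i

/-- A negative root of type `Cₙ`: the negative of a positive root. -/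
def IsNegC (n : ℕ) (x : EuclideanSpace ℝ (Fin n)) : Prop :=
  IsPosC n (-x)

/-- The simple reflections `sᵢ = s_{αᵢ}` of type `Cₙ`. -/
noncomputable def sC (n i : ℕ) : Equiv.Perm (EuclideanSpace ℝ (Fin n)) :=
  sRefl (alphaC n i)

/-- `v = s₁ ∘ s₂ ∘ ⋯ ∘ sₙ` (rightmost factor applied first);
recall that in `Equiv.Perm` the product `f * g` is the composition `f ∘ g`. -/
noncomputable def vC (n : ℕ) : Equiv.Perm (EuclideanSpace ℝ (Fin n)) :=
  ((List.range n).map fun k => sC n (k + 1)).prod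

private lemma sRefl_apply {V : Type*} [NormedAddCommGroup V] [InnerProductSpace ℝ V]
    (b x : V) : sRefl b x = x - (2 * ⟪x, b⟫_ℝ / ⟪b, b⟫_ℝ) • b := rfl

private lemma sRefl_lin {V : Type*} [NormedAddCommGroup V] [InnerProductSpace ℝ V]
    (b : V) (a : ℝ) (x y : V) :
    sRefl b (a • x + y) = a • sRefl b x + sRefl b y := by
  simp only [sRefl_apply, inner_add_left, real_inner_smul_left]
  have h : (2 * (a * ⟪x, b⟫_ℝ + ⟪y, b⟫_ℝ)) / ⟪b, b⟫_ℝ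
      = a * (2 * ⟪x, b⟫_ℝ / ⟪b, b⟫_ℝ) + 2 * ⟪y, b⟫_ℝ / ⟪b, b⟫_ℝ := by
    ring
  rw [h]
  module

private lemma sRefl_neg {V : Type*} [NormedAddCommGroup V] [InnerProductSpace ℝ V]
    (b x : V) : sRefl b (-x) = -sRefl b x := by
  have h0 : sRefl b 0 = 0 := by simp [sRefl_apply]
  have := sRefl_lin b (-1) x 0
  simpa [h0] using this

private lemma E_val (n i : ℕ) (h1 : 1 ≤ i) (h2 : i ≤ n) :
    E n i = EuclideanSpace.single (⟨i - 1, by omega⟩ : Fin n) 1 := by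
  rw [E, dif_pos ⟨h1, h2⟩]

private lemma inner_E (n i j : ℕ) (hi1 : 1 ≤ i) (hin : i ≤ n) (hj1 : 1 ≤ j) (hjn : j ≤ n) :
    ⟪E n i, E n j⟫_ℝ = if i = j then 1 else 0 := by
  rw [E_val n i hi1 hin, E_val n j hj1 hjn, EuclideanSpace.inner_single_left,
    EuclideanSpace.single_apply]
  simp only [map_one, one_mul, Fin.mk.injEq]
  split_ifs <;> first | rfl | omega

private lemma alphaC_lt (n i : ℕ) (h : i < n) : alphaC n i = E n i - E n (i + 1) :=
  if_neg (by omega)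

private lemma alphaC_top (n : ℕ) : alphaC n n = (2 : ℝ) • E n n := if_pos rfl

private lemma sC_lt_apply (n i k : ℕ) (hi1 : 1 ≤ i) (hin : i + 1 ≤ n)
    (hk1 : 1 ≤ k) (hkn : k ≤ n) :
    sC n i (E n k) = if k = i then E n (i + 1) else if k = i + 1 then E n i else E n k := by
  have hii : i ≤ n := by omega
  have h1 : (1 : ℕ) ≤ i + 1 := by omega
  have hαα : ⟪alphaC n i, alphaC n i⟫_ℝ = 2 := by
    rw [alphaC_lt n i (by omega), inner_sub_left, inner_sub_right, inner_sub_right,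
      inner_E n i i hi1 hii hi1 hii, inner_E n i (i + 1) hi1 hii h1 hin,
      inner_E n (i + 1) i h1 hin hi1 hii, inner_E n (i + 1) (i + 1) h1 hin h1 hin]
    rw [if_pos rfl, if_neg (by omega), if_neg (by omega), if_pos rfl]
    ring
  have hkα : ⟪E n k, alphaC n i⟫_ℝ
      = (if k = i then 1 else 0) - (if k = i + 1 then 1 else 0) := by
    rw [alphaC_lt n i (by omega), inner_sub_right,
      inner_E n k i hk1 hkn hi1 hii, inner_E n k (i + 1) hk1 hkn h1 hin]
  rw [sC, sRefl_apply, hαα, hkα, alphaC_lt n i (by omega)]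
  by_cases hki : k = i
  · rw [if_pos hki, if_pos hki, if_neg (by omega), hki]
    norm_num
  · rw [if_neg hki, if_neg hki]
    by_cases hki1 : k = i + 1
    · rw [if_pos hki1, if_pos hki1, hki1]
      norm_num
    · rw [if_neg hki1, if_neg hki1]
      norm_num

private lemma sC_top_apply (n k : ℕ) (hn : 1 ≤ n) (hk1 : 1 ≤ k) (hkn : k ≤ n) :
    sC n n (E n k) = if k = n then -E n n else E n k := by
  have hαα : ⟪alphaC n n, alphaC n n⟫_ℝ = 4 := by
    rw [alphaC_top, real_inner_smul_left, real_inner_smul_right,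
      inner_E n n n hn le_rfl hn le_rfl, if_pos rfl]
    ring
  have hkα : ⟪E n k, alphaC n n⟫_ℝ = 2 * (if k = n then 1 else 0) := by
    rw [alphaC_top, real_inner_smul_right, inner_E n k n hk1 hkn hn le_rfl]
  rw [sC, sRefl_apply, hαα, hkα, alphaC_top]
  by_cases hk : k = n
  · rw [if_pos hk, if_pos hk, hk]
    norm_num
    module
  · rw [if_neg hk, if_neg hk]
    norm_num

private lemma prodC_lin (n : ℕ) (L : List ℕ) (a : ℝ) (x y : EuclideanSpace ℝ (Fin n)) :
    (L.map (sC n)).prod (a • x + y)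
      = a • (L.map (sC n)).prod x + (L.map (sC n)).prod y := by
  induction L generalizing x y with
  | nil => simp
  | cons i L ih =>
      simp only [List.map_cons, List.prod_cons, Equiv.Perm.mul_apply, ih]
      exact sRefl_lin _ a _ _

private lemma S_apply (n : ℕ) : ∀ d m : ℕ, 1 ≤ m → m + d = n → ∀ k, 1 ≤ k → k ≤ n →
    ((List.range' m (d + 1)).map (sC n)).prod (E n k)
      = if k < m then E n k else if k < n then E n (k + 1) else -E n m := by
  intro d
  induction d with
  | zero =>
      intro m hm1 hmn k hk1 hkn
      have hm : m = n := by omega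
      subst hm
      have : List.range' m 1 = [m] := rfl
      rw [this]
      simp only [List.map_cons, List.map_nil, List.prod_cons, List.prod_nil, mul_one]
      rw [sC_top_apply m k hm1 hk1 hkn]
      by_cases hk : k = m
      · rw [if_pos hk, if_neg (by omega), if_neg (by omega)]
      · rw [if_neg hk, if_pos (by omega)]
  | succ d ih =>
      intro m hm1 hmn k hk1 hkn
      have hmn' : m + 1 ≤ n := by omega
      rw [List.range'_succ]
      simp only [List.map_cons, List.prod_cons, Equiv.Perm.mul_apply]
      rw [ih (m + 1) (by omega) (by omega) k hk1 hkn]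
      by_cases h1 : k < m + 1
      · rw [if_pos h1]
        by_cases h2 : k = m
        · rw [sC_lt_apply n m k hm1 hmn' hk1 hkn, if_pos h2, if_neg (by omega),
            if_pos (by omega), h2]
        · rw [sC_lt_apply n m k hm1 hmn' hk1 hkn, if_neg h2, if_neg (by omega),
            if_pos (by omega)]
      · rw [if_neg h1]
        by_cases h2 : k < n
        · rw [if_pos h2, sC_lt_apply n m (k + 1) hm1 hmn' (by omega) (by omega),
            if_neg (by omega), if_neg (by omega), if_neg (by omega), if_pos h2]
        · rw [if_neg h2, if_neg h2, if_neg (by omega : ¬ k < m),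
            show sC n m (-E n (m + 1)) = -sC n m (E n (m + 1)) from sRefl_neg _ _,
            sC_lt_apply n m (m + 1) hm1 hmn' (by omega) hmn', if_neg (by omega), if_pos rfl]

private lemma vC_eq (n : ℕ) : vC n = ((List.range' 1 n).map (sC n)).prod := by
  rw [vC, List.range'_eq_map_range, List.map_map]
  congr 1
  apply List.map_congr_left
  intro k _
  simp [Nat.add_comm]

private lemma vC_apply (n k : ℕ) (hn : 1 ≤ n) (hk1 : 1 ≤ k) (hkn : k ≤ n) :
    vC n (E n k) = if k < n then E n (k + 1) else -E n 1 := by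
  rw [vC_eq]
  have h := S_apply n (n - 1) 1 le_rfl (by omega) k hk1 hkn
  rw [show n - 1 + 1 = n by omega] at h
  rw [h, if_neg (by omega : ¬ k < 1)]

private lemma vC_lin (n : ℕ) (a : ℝ) (x y : EuclideanSpace ℝ (Fin n)) :
    vC n (a • x + y) = a • vC n x + vC n y := by
  rw [vC_eq]; exact prodC_lin n _ a x y

private lemma vC_zero (n : ℕ) : vC n 0 = 0 := by
  have h := vC_lin n 1 0 0
  simp only [one_smul, add_zero, smul_zero, zero_add] at h
  exact (right_eq_add.mp h)

private lemma vC_smul (n : ℕ) (a : ℝ) (x : EuclideanSpace ℝ (Fin n)) :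
    vC n (a • x) = a • vC n x := by
  have h := vC_lin n a x 0
  simpa [vC_zero] using h

private lemma vC_add (n : ℕ) (x y : EuclideanSpace ℝ (Fin n)) :
    vC n (x + y) = vC n x + vC n y := by
  have h := vC_lin n 1 x y
  simpa using h

private lemma vC_neg (n : ℕ) (x : EuclideanSpace ℝ (Fin n)) :
    vC n (-x) = -vC n x := by
  have h := vC_smul n (-1) x
  simpa using h

private lemma vC_sub (n : ℕ) (x y : EuclideanSpace ℝ (Fin n)) :
    vC n (x - y) = vC n x - vC n y := by
  rw [sub_eq_add_neg, vC_add, vC_neg, sub_eq_add_neg]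

private lemma sum_alpha (n : ℕ) (hn : 1 ≤ n) :
    ∑ k ∈ Finset.Icc 1 n, alphaC n k = E n 1 + E n n := by
  have key : ∀ m, m + 1 ≤ n → ∑ k ∈ Finset.Icc 1 m, alphaC n k = E n 1 - E n (m + 1) := by
    intro m
    induction m with
    | zero => intro _; simp
    | succ m ih =>
        intro h
        rw [Finset.sum_Icc_succ_top (by omega), ih (by omega), alphaC_lt n (m + 1) (by omega)]
        abel
  obtain ⟨p, rfl⟩ : ∃ p, n = p + 1 := ⟨n - 1, by omega⟩
  rw [Finset.sum_Icc_succ_top (by omega), key p le_rfl, alphaC_top]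
  module

/-- Type `Cₙ` (`n ≥ 3`): for `v = s₁ ∘ s₂ ∘ ⋯ ∘ sₙ` one has `v⁻¹(α₀) = -αₙ` (where
`α₀ = 2e₁` is the highest root), `v⁻¹(α₁) = -(α₁ + α₂ + ⋯ + αₙ)`, `v⁻¹(αⱼ) = αⱼ₋₁` for
`2 ≤ j ≤ n - 1`, and `v⁻¹(αₙ) = αₙ + 2αₙ₋₁`. -/
theorem stmt_11 (n : ℕ) (hn : 3 ≤ n) :
    (vC n)⁻¹ ((2 : ℝ) • E n 1) = -alphaC n n ∧
    (vC n)⁻¹ (alphaC n 1) = -∑ k ∈ Finset.Icc 1 n, alphaC n k ∧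
    (∀ j, 2 ≤ j → j ≤ n - 1 → (vC n)⁻¹ (alphaC n j) = alphaC n (j - 1)) ∧
    (vC n)⁻¹ (alphaC n n) = alphaC n n + (2 : ℝ) • alphaC n (n - 1) := by
  have hn1 : 1 ≤ n := by omega
  refine ⟨?_, ?_, ?_, ?_⟩
  · rw [Equiv.Perm.inv_def, Equiv.symm_apply_eq, alphaC_top, vC_neg, vC_smul,
      vC_apply n n hn1 hn1 le_rfl, if_neg (lt_irrefl n)]
    module
  · rw [Equiv.Perm.inv_def, Equiv.symm_apply_eq, sum_alpha n hn1, vC_neg, vC_add,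
      vC_apply n 1 hn1 le_rfl hn1, vC_apply n n hn1 hn1 le_rfl,
      if_pos (by omega : 1 < n), if_neg (lt_irrefl n), alphaC_lt n 1 (by omega)]
    module
  · intro j h2 hj
    rw [Equiv.Perm.inv_def, Equiv.symm_apply_eq, alphaC_lt n (j - 1) (by omega),
      show j - 1 + 1 = j by omega, vC_sub,
      vC_apply n (j - 1) hn1 (by omega) (by omega), vC_apply n j hn1 (by omega) (by omega),
      if_pos (by omega : j - 1 < n), if_pos (by omega : j < n),
      show j - 1 + 1 = j by omega, alphaC_lt n j (by omega)]
  · rw [Equiv.Perm.inv_def, Equiv.symm_apply_eq]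
    have hX : alphaC n n + (2 : ℝ) • alphaC n (n - 1) = (2 : ℝ) • E n (n - 1) := by
      rw [alphaC_top, alphaC_lt n (n - 1) (by omega), show n - 1 + 1 = n by omega]
      module
    rw [hX, vC_smul, vC_apply n (n - 1) hn1 (by omega) (by omega),
      if_pos (by omega : n - 1 < n), show n - 1 + 1 = n by omega, alphaC_top]
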